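/- Let υ : ℤ → ℂ^{1×r} be finitely supported with first entry symbol υ̂_1(0) ≠ 0, and m ∈ ℕ. Then there exists a finitely supported U : ℤ → ℂ^{r×r} that is strongly invertible (i.e., det(Û(ξ)) is a nonzero monomial in e^{-iξ}) such that υ̂(ξ)Û(ξ) = (1 + O(|ξ|), O(|ξ|^{m+1}), …, O(|ξ|^{m+1})) as ξ → 0. Explicitly, U may be taken as (1/υ̂_1(0)) times the matrix sequence with δ on the diagonal, first row (δ, −u_2, …, −u_r), and zeros elsewhere, where each u_ℓ ∈ ℓ_0(ℤ) satisfies û_ℓ(ξ) = υ̂_ℓ(ξ)/υ̂_1(ξ) + O(|ξ|^{m+1}) as ξ → 0. -/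

import Mathlib

/-!
With `c = υ̂_1(0)⁻¹`, the symbol of the explicit `U` is `c • (1 + e₁ wᵀ)` with `w_1 = 0` and
`w_ℓ = -û_ℓ`, so its determinant is `c ^ r` by the rank-one determinant formula, and
`(υ̂ Û)_ℓ = c (υ̂_ℓ - υ̂_1 û_ℓ)` for `ℓ ≠ 1`. It remains to find trigonometric polynomials `û_ℓ`
with `û_ℓ υ̂_1 - υ̂_ℓ = O(|ξ|^{m+1})`. By the Leibniz rule these conditions form a triangular
system for the derivatives `û_ℓ^{(s)}(0)`, `s ≤ m`, with diagonal entries `υ̂_1(0) ≠ 0`; any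
such jet is attained by a trigonometric polynomial with frequencies `0, …, m`, since the
Vandermonde matrix of the nodes `-i·0, …, -i·m` is invertible.
-/

open Complex

/-- Symbol (Fourier series) of a scalar sequence. -/
noncomputable def symb (u : ℤ → ℂ) (ξ : ℂ) : ℂ :=
  ∑ᶠ k : ℤ, u k * Complex.exp (-Complex.I * k * ξ)

/-- Entrywise symbol of a matrix-valued sequence. -/
noncomputable def symbM {r : ℕ} (a : ℤ → Fin r → Fin r → ℂ) (i ℓ : Fin r) (ξ : ℂ) : ℂ :=
  ∑ᶠ k : ℤ, a k i ℓ * Complex.exp (-Complex.I * k * ξ)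

open Function

lemma symb_eq_sum {u : ℤ → ℂ} {s : Finset ℤ} (h : support u ⊆ s) (ξ : ℂ) :
    symb u ξ = ∑ k ∈ s, u k * exp (-I * k * ξ) :=
  finsum_eq_sum_of_support_subset _ fun k hk => h fun hu => hk (by simp [hu])

lemma symb_eq_toFinset_sum {u : ℤ → ℂ} (hu : (support u).Finite) :
    symb u = fun ξ => ∑ k ∈ hu.toFinset, u k * exp (-I * k * ξ) :=
  funext (symb_eq_sum (by simp))

lemma symb_apply_zero (u : ℤ → ℂ) : symb u 0 = ∑ᶠ k, u k := by
  simp [symb]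

lemma symb_const_mul (u : ℤ → ℂ) (c ξ : ℂ) : symb (fun k => c * u k) ξ = c * symb u ξ := by
  simp only [symb, mul_assoc, mul_finsum]

lemma symb_zero (ξ : ℂ) : symb (fun _ => 0) ξ = 0 := by
  simp [symb]

lemma symb_neg (u : ℤ → ℂ) (ξ : ℂ) : symb (fun k => -u k) ξ = -symb u ξ := by
  simpa using symb_const_mul u (-1) ξ

lemma symb_delta (ξ : ℂ) : symb (fun k => if k = 0 then 1 else 0) ξ = 1 := by
  rw [symb, finsum_eq_single _ 0 fun k hk => by simp [hk]]
  simp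

lemma iteratedDeriv_symb {u : ℤ → ℂ} (hu : (support u).Finite) (j : ℕ) :
    iteratedDeriv j (symb u) = symb (fun k => (-I * k) ^ j * u k) := by
  have hsupp : support (fun k => (-I * k) ^ j * u k) ⊆ hu.toFinset := by simp
  funext ξ
  rw [symb_eq_toFinset_sum hu, symb_eq_sum hsupp, iteratedDeriv_fun_sum (by fun_prop)]
  refine Finset.sum_congr rfl fun k _ => ?_
  rw [iteratedDeriv_const_mul_field, iteratedDeriv_cexp_const_mul]
  ring

lemma contDiff_symb {u : ℤ → ℂ} (hu : (support u).Finite) {n : WithTop ℕ∞} :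
    ContDiff ℂ n (symb u) := by
  rw [symb_eq_toFinset_sum hu]
  fun_prop

lemma iteratedDeriv_symb_zero {u : ℤ → ℂ} (hu : (support u).Finite) (j : ℕ) :
    iteratedDeriv j (symb u) 0 = ∑ᶠ k, (-I * k) ^ j * u k := by
  rw [iteratedDeriv_symb hu, symb_apply_zero]

lemma exists_iteratedDeriv_symb_zero_eq (m : ℕ) (c : ℕ → ℂ) :
    ∃ u : ℤ → ℂ, (support u).Finite ∧ ∀ j ≤ m, iteratedDeriv j (symb u) 0 = c j := by
  let e : Fin (m + 1) ↪ ℤ := Fin.valEmbedding.trans Nat.castEmbedding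
  let v : Fin (m + 1) → ℂ := fun i => -I * e i
  have hv : Injective v := fun i i' h => e.injective (by simpa [v] using h)
  obtain ⟨a, ha⟩ := Matrix.vecMul_surjective_iff_isUnit.mpr
    ((Matrix.vandermonde v).isUnit_iff_isUnit_det.mpr
      (Matrix.det_vandermonde_ne_zero_iff.mpr hv).isUnit) (fun s : Fin (m + 1) => c s)
  let u : ℤ → ℂ := extend e a 0
  have hsupp : support u ⊆ Finset.univ.map e := by
    intro k hk
    by_contra hke
    exact hk (extend_apply' _ _ _ fun ⟨i, hi⟩ => hke (by simp [← hi]))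
  refine ⟨u, (Finset.univ.map e).finite_toSet.subset hsupp, fun j hj => ?_⟩
  rw [iteratedDeriv_symb_zero ((Finset.univ.map e).finite_toSet.subset hsupp),
    finsum_eq_sum_of_support_subset _ ((support_mul_subset_right _ _).trans hsupp),
    Finset.sum_map]
  simpa [u, e.injective.extend_apply, Matrix.vecMul, dotProduct, Matrix.vandermonde, v,
    mul_comm] using congrFun ha ⟨j, Nat.lt_succ_of_le hj⟩

lemma exists_sum_choose_mul_eq {K : Type*} [Field K] {B : ℕ → K} (hB : B 0 ≠ 0)
    (V : ℕ → K) (m : ℕ) :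
    ∃ c : ℕ → K, ∀ j ≤ m, ∑ s ∈ Finset.range (j + 1), j.choose s * c s * B (j - s) = V j := by
  induction m with
  | zero => exact ⟨fun _ => V 0 / B 0, fun j hj => by simp [Nat.le_zero.mp hj, hB]⟩
  | succ m ih =>
    obtain ⟨c, hc⟩ := ih
    -- forward substitution: only the new unknown `c (m + 1)` enters equation `m + 1`
    let x := (V (m + 1) -
      ∑ s ∈ Finset.range (m + 1), (m + 1).choose s * c s * B (m + 1 - s)) / B 0
    have hlow : ∀ j ≤ m + 1, ∀ s ∈ Finset.range j, update c (m + 1) x s = c s :=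
      fun j hj s hs => update_of_ne (by simp at hs; omega) _ _
    refine ⟨update c (m + 1) x, fun j hj => ?_⟩
    rcases Nat.lt_or_eq_of_le hj with hj | rfl
    · rw [← hc j (by omega)]
      exact Finset.sum_congr rfl fun s hs => by rw [hlow (j + 1) (by omega) s hs]
    · rw [Finset.sum_range_succ, Finset.sum_congr rfl fun s hs => by rw [hlow (m + 1) le_rfl s hs]]
      simp only [Nat.choose_self, Nat.cast_one, one_mul, Nat.sub_self, update_self, x]
      field_simp
      ring

lemma exists_iteratedDeriv_symb_mul_sub_eq_zero {b v : ℤ → ℂ} (hb : (support b).Finite)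
    (hv : (support v).Finite) (hb0 : symb b 0 ≠ 0) (m : ℕ) :
    ∃ u : ℤ → ℂ, (support u).Finite ∧
      ∀ j ≤ m, iteratedDeriv j (fun ξ => symb u ξ * symb b ξ - symb v ξ) 0 = 0 := by
  obtain ⟨c, hc⟩ := exists_sum_choose_mul_eq (B := fun j => iteratedDeriv j (symb b) 0)
    (by simpa using hb0) (fun j => iteratedDeriv j (symb v) 0) m
  obtain ⟨u, hu, huc⟩ := exists_iteratedDeriv_symb_zero_eq m c
  refine ⟨u, hu, fun j hj => ?_⟩
  change iteratedDeriv j (symb u * symb b - symb v) 0 = 0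
  rw [iteratedDeriv_sub (f := symb u * symb b)
    ((contDiff_symb hu).mul (contDiff_symb hb)).contDiffAt (contDiff_symb hv).contDiffAt,
    ← hc j hj, sub_eq_zero,
    iteratedDeriv_mul (contDiff_symb hu).contDiffAt (contDiff_symb hb).contDiffAt]
  exact Finset.sum_congr rfl fun s hs => by rw [huc s (by simp at hs; omega)]

section NormalForm

variable {r : ℕ} (c : ℂ) (i₀ : Fin r) (u : Fin r → ℤ → ℂ)

def normalForm : ℤ → Fin r → Fin r → ℂ := fun k i j =>
  c * (if i = i₀ then (if j = i₀ then (if k = 0 then 1 else 0) else -(u j k))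
    else (if i = j ∧ k = 0 then 1 else 0))

lemma finite_support_normalForm (hu : ∀ j, (support (u j)).Finite) :
    (support (normalForm c i₀ u)).Finite := by
  refine ((Set.finite_singleton 0).union (Set.finite_iUnion hu)).subset fun k hk => ?_
  by_contra hk'
  simp only [Set.mem_union, Set.mem_singleton_iff, Set.mem_iUnion, mem_support, not_or,
    not_exists, not_not] at hk'
  exact hk (funext₂ fun i j => by simp [normalForm, hk'.1, hk'.2])

lemma symbM_normalForm (ξ : ℂ) :
    Matrix.of (fun i j => symbM (normalForm c i₀ u) i j ξ) =
      c • (1 + Matrix.replicateCol Unit (Pi.single i₀ (1 : ℂ)) *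
        Matrix.replicateRow Unit (fun j => if j = i₀ then 0 else -symb (u j) ξ)) := by
  ext i j
  change symb (fun k => normalForm c i₀ u k i j) ξ = _
  simp only [normalForm, symb_const_mul]
  by_cases hi : i = i₀ <;> by_cases hj : j = i₀ <;> by_cases hij : i = j <;>
    simp_all [Matrix.mul_apply, symb_delta, symb_neg, symb_zero]

lemma det_symbM_normalForm (ξ : ℂ) :
    (Matrix.of fun i j => symbM (normalForm c i₀ u) i j ξ).det = c ^ r := by
  rw [symbM_normalForm, Matrix.det_smul, Matrix.det_one_add_replicateCol_mul_replicateRow]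
  simp

lemma sum_mul_symbM_normalForm (f : Fin r → ℂ) (ℓ : Fin r) (ξ : ℂ) :
    ∑ i, f i * symbM (normalForm c i₀ u) i ℓ ξ =
      c * (f ℓ - f i₀ * if ℓ = i₀ then 0 else symb (u ℓ) ξ) := by
  have hentry (i : Fin r) := congrFun₂ (symbM_normalForm c i₀ u ξ) i ℓ
  simp only [Matrix.of_apply] at hentry
  simp only [hentry]
  by_cases hℓ : ℓ = i₀ <;>
    simp [hℓ, Matrix.one_apply, Matrix.mul_apply, Pi.single_apply, mul_add,
      Finset.sum_add_distrib] <;>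
    ring

end NormalForm

/-- normal form — there is a strongly invertible, finitely supported `U` with
`υ̂(ξ)Û(ξ) = (1 + O(|ξ|), O(|ξ|^{m+1}), …, O(|ξ|^{m+1}))`, given explicitly by the matrix
with first row `(δ, -u_2, …, -u_r)/υ̂_1(0)` and `δ/υ̂_1(0)` on the diagonal, where
`û_ℓ = υ̂_ℓ/υ̂_1 + O(|ξ|^{m+1})`. -/
theorem stmt15 (r : ℕ) (hr : 0 < r) (m : ℕ)
    (υ : ℤ → Fin r → ℂ) (hυ : (Function.support υ).Finite)
    (hυ1 : symb (fun k => υ k ⟨0, hr⟩) 0 ≠ 0) :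
    ∃ U : ℤ → Fin r → Fin r → ℂ, ∃ u : Fin r → ℤ → ℂ,
      (Function.support U).Finite ∧
      -- strong invertibility: `det Û(ξ)` is a nonzero monomial in `e^{-iξ}`
      (∃ cst : ℂ, cst ≠ 0 ∧ ∃ N : ℤ, ∀ ξ : ℂ,
        Matrix.det (Matrix.of fun i j => symbM U i j ξ) =
          cst * Complex.exp (-Complex.I * (N : ℂ) * ξ)) ∧
      -- `υ̂ Û = (1 + O(|ξ|), O(|ξ|^{m+1}), …, O(|ξ|^{m+1}))`
      ((∑ i : Fin r, symb (fun k => υ k i) 0 * symbM U i ⟨0, hr⟩ 0) = 1 ∧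
        ∀ ℓ : Fin r, ℓ ≠ ⟨0, hr⟩ → ∀ j ≤ m,
          iteratedDeriv j
            (fun ξ : ℂ => ∑ i : Fin r, symb (fun k => υ k i) ξ * symbM U i ℓ ξ) 0 = 0) ∧
      -- the entries `u_ℓ` are finitely supported and satisfy `û_ℓ υ̂_1 = υ̂_ℓ + O(|ξ|^{m+1})`
      (∀ ℓ : Fin r, (Function.support (u ℓ)).Finite) ∧
      (∀ ℓ : Fin r, ℓ ≠ ⟨0, hr⟩ → ∀ j ≤ m,
        iteratedDeriv j
          (fun ξ : ℂ => symb (u ℓ) ξ * symb (fun k => υ k ⟨0, hr⟩) ξ -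
            symb (fun k => υ k ℓ) ξ) 0 = 0) ∧
      -- explicit form of `U`
      (∀ k : ℤ, ∀ i j : Fin r,
        U k i j = (symb (fun n => υ n ⟨0, hr⟩) 0)⁻¹ *
          (if i = ⟨0, hr⟩ then
            (if j = ⟨0, hr⟩ then (if k = 0 then 1 else 0) else -(u j k))
          else (if i = j ∧ k = 0 then 1 else 0))) := by
  set i₀ : Fin r := ⟨0, hr⟩
  set c := (symb (fun n => υ n i₀) 0)⁻¹
  have hυfin (i : Fin r) : (support fun k => υ k i).Finite :=
    hυ.subset fun k hk h => hk (by simp [h])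
  choose u hu hjet using fun ℓ =>
    exists_iteratedDeriv_symb_mul_sub_eq_zero (hυfin i₀) (hυfin ℓ) hυ1 m
  refine ⟨normalForm c i₀ u, u, finite_support_normalForm c i₀ u hu,
    ⟨c ^ r, pow_ne_zero r (inv_ne_zero hυ1), 0, fun ξ => by simp [det_symbM_normalForm]⟩,
    ⟨?_, fun ℓ hℓ j hj => ?_⟩, hu, fun ℓ _ j hj => hjet ℓ j hj, fun k i j => rfl⟩
  · simp [sum_mul_symbM_normalForm, c, hυ1]
  · have hprod : (fun ξ => ∑ i, symb (fun k => υ k i) ξ * symbM (normalForm c i₀ u) i ℓ ξ) =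
        fun ξ => -c * (symb (u ℓ) ξ * symb (fun k => υ k i₀) ξ - symb (fun k => υ k ℓ) ξ) := by
      funext ξ
      rw [sum_mul_symbM_normalForm, if_neg hℓ]
      ring
    rw [hprod, iteratedDeriv_const_mul_field, hjet ℓ j hj, mul_zero]
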